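/- Let G be a t.d.l.c. group. Then G has rational discrete cohomological dimension 0 (i.e., the trivial module Q is projective in the category of discrete Q[G]-modules) if and only if G is compact. -/

import Mathlib

universe u

/-- A discrete `ℚ[G]`-module over a topological group `G`: a `ℚ`-vector space with
a `ℚ`-linear `G`-action in which every element has open stabilizer. -/
structure DiscGMod (G : Type u) [Group G] [TopologicalSpace G] : Type (u + 1) where
  carrier : Type u
  [acg : AddCommGroup carrier]
  [mod : Module ℚ carrier]
  [act : DistribMulAction G carrier]
  [cmm : SMulCommClass G ℚ carrier]
  discrete : ∀ m : carrier, IsOpen ((MulAction.stabilizer G m : Subgroup G) : Set G)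

attribute [instance] DiscGMod.acg DiscGMod.mod DiscGMod.act DiscGMod.cmm

/-- A morphism of discrete `ℚ[G]`-modules is a `G`-equivariant `ℚ`-linear map. -/
def DiscGMod.Equivariant {G : Type u} [Group G] [TopologicalSpace G]
    {A B : DiscGMod G} (f : A.carrier →ₗ[ℚ] B.carrier) : Prop :=
  ∀ (g : G) (a : A.carrier), f (g • a) = g • f a

/-- Projectivity, relative to the category of discrete `ℚ[G]`-modules, of a
`ℚ`-module `P` equipped with a `G`-action `σ`: every equivariant map from `P` to a
discrete module lifts along every equivariant surjection of discrete modules. -/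
def ProjOverDiscrete (G : Type u) [Group G] [TopologicalSpace G]
    (P : Type u) [AddCommGroup P] [Module ℚ P] (σ : G → P → P) : Prop :=
  ∀ (A B : DiscGMod G) (π : B.carrier →ₗ[ℚ] A.carrier),
    DiscGMod.Equivariant π → Function.Surjective π →
    ∀ φ : P →ₗ[ℚ] A.carrier, (∀ (g : G) (x : P), φ (σ g x) = g • φ x) →
    ∃ ψ : P →ₗ[ℚ] B.carrier, (∀ (g : G) (x : P), ψ (σ g x) = g • ψ x) ∧ π.comp ψ = φ

/-!
If `G` is compact, every vector of a discrete module has finite orbit, so averaging over the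
orbit lifts invariant vectors along surjections, and an equivariant map out of the trivial
module is just an invariant vector. Conversely, take a compact open subgroup `O` (van Dantzig)
and lift `1` along the augmentation `ℚ[G/O] → ℚ`: the lift is a nonzero `G`-invariant finitely
supported function on the transitive `G`-set `G/O`, hence constant with finite support, so
`G/O` is finite and `G` is a finite union of compact cosets.
-/

open Set Filter Pointwise MulAction

attribute [local instance] Finsupp.comapSMul Finsupp.comapMulAction Finsupp.comapDistribMulAction

section Algebra

variable {G : Type*} [Group G]

theorem exists_fixed_preimage_of_finite_orbit {K M N : Type*} [DivisionRing K] [CharZero K]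
    [AddCommMonoid M] [Module K M] [DistribMulAction G M] [SMulCommClass G K M]
    [AddCommMonoid N] [Module K N] [SMul G N]
    (π : M →ₗ[K] N) (hπ : ∀ (g : G) (m : M), π (g • m) = g • π m)
    {b : M} [Finite (orbit G b)] (hb : ∀ g : G, g • π b = π b) :
    ∃ c : M, (∀ g : G, g • c = c) ∧ π c = π b := by
  have := Fintype.ofFinite (orbit G b)
  have : Nonempty (orbit G b) := ⟨⟨b, mem_orbit_self b⟩⟩
  set n := Fintype.card (orbit G b)
  set T := ∑ x : orbit G b, (x : M)
  have hT : ∀ g : G, g • T = T := fun g => by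
    rw [Finset.smul_sum]
    exact Fintype.sum_equiv (toPerm g) _ _ fun _ => orbit.coe_smul.symm
  have hπT : π T = (n : K) • π b := by
    have hπx : ∀ x : orbit G b, π x = π b := by
      rintro ⟨_, g, rfl⟩
      exact (hπ g b).trans (hb g)
    simp only [T, map_sum, hπx, Finset.sum_const, Finset.card_univ, Nat.cast_smul_eq_nsmul, n]
  refine ⟨(n : K)⁻¹ • T, fun g => by rw [smul_comm, hT], ?_⟩
  rw [map_smul, hπT, inv_smul_smul₀ (Nat.cast_ne_zero.mpr Fintype.card_ne_zero)]

theorem finite_of_smul_invariant_finsupp {X R : Type*} [MulAction G X] [IsPretransitive G X]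
    [AddCommMonoid R] (f : X →₀ R) (hf : ∀ g : G, g • f = f) (hf0 : f ≠ 0) :
    Finite X := by
  obtain ⟨x₀, hx₀⟩ := Finsupp.ne_iff.mp hf0
  have hsupp : (univ : Set X) ⊆ f.support := fun x _ => by
    obtain ⟨g, rfl⟩ := exists_smul_eq G x₀ x
    have := Finsupp.comapSMul_apply g f (g • x₀)
    rw [hf, inv_smul_smul] at this
    exact Finsupp.mem_support_iff.mpr (this ▸ hx₀)
  exact finite_univ_iff.mp (f.support.finite_toSet.subset hsupp)

end Algebra

section Topology

/-- **van Dantzig's theorem**. -/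
theorem exists_isCompact_openSubgroup {G : Type*} [Group G] [TopologicalSpace G]
    [IsTopologicalGroup G] [TotallyDisconnectedSpace G] [LocallyCompactSpace G] :
    ∃ O : OpenSubgroup G, IsCompact (O : Set G) := by
  obtain ⟨K, hK, hK1⟩ := exists_compact_mem_nhds (1 : G)
  obtain ⟨W, hW, h1W, hWK⟩ := loc_compact_Haus_tot_disc_of_zero_dim.mem_nhds_iff.mp hK1
  have hWc : IsCompact W := hK.of_isClosed_subset hW.isClosed hWK
  obtain ⟨V, hV, hWV⟩ := compact_open_separated_mul_right hWc hW.isOpen subset_rfl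
  set H := Subgroup.closure (V ∩ V⁻¹)
  have hHopen : IsOpen (H : Set G) := H.isOpen_of_mem_nhds (g := 1) <|
    mem_of_superset (inter_mem hV (inv_mem_nhds_one G hV)) Subgroup.subset_closure
  -- Right translation by an element of `H` preserves `W`, so `H = 1 * H ⊆ W`.
  have hHW : (H : Set G) ⊆ W := fun x hx => by
    suffices ∀ w, w * x ∈ W ↔ w ∈ W by simpa using (this 1).mpr h1W
    induction hx using Subgroup.closure_induction with
    | mem v hv => exact fun w => ⟨fun h => by simpa using hWV (mul_mem_mul h hv.2),
        fun h => hWV (mul_mem_mul h hv.1)⟩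
    | one => simp
    | mul x y _ _ hx hy => exact fun w => by rw [← mul_assoc, hy, hx]
    | inv x _ hx => exact fun w => by rw [← hx, inv_mul_cancel_right]
  exact ⟨⟨H, hHopen⟩, hWc.of_isClosed_subset (H.isClosed_of_isOpen hHopen) hHW⟩

variable {G : Type*} [Group G] [TopologicalSpace G] [SeparatelyContinuousMul G]

theorem compactSpace_of_isCompact_of_finite_quotient {H : Subgroup G}
    (hH : IsCompact (H : Set G)) [Finite (G ⧸ H)] : CompactSpace G := by
  have hcover : (univ : Set G) = ⋃ q : G ⧸ H, q.out • (H : Set G) :=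
    (eq_univ_of_forall fun g => mem_iUnion.mpr ⟨QuotientGroup.mk g,
      (mem_leftCoset_iff _).mpr (QuotientGroup.eq.mp (QuotientGroup.out_eq' _))⟩).symm
  exact ⟨hcover ▸ isCompact_iUnion fun q => hH.smul _⟩

theorem isOpen_stabilizer_finsupp {X R : Type*} [MulAction G X] [AddCommMonoid R]
    (hX : ∀ x : X, IsOpen (stabilizer G x : Set G)) (m : X →₀ R) :
    IsOpen (stabilizer G m : Set G) := by
  have hopen : IsOpen (⋂ x ∈ m.support, (stabilizer G x : Set G)) :=
    isOpen_biInter_finset fun x _ => hX x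
  refine Subgroup.isOpen_of_mem_nhds _ (g := 1) <|
    mem_of_superset (hopen.mem_nhds (by simp)) fun g hg => ?_
  have hfix : ∀ x ∈ m.support, g • x = id x := by simpa using hg
  change g • m = m
  rw [Finsupp.comapSMul_def, Finsupp.mapDomain_congr hfix, Finsupp.mapDomain_id]

end Topology

namespace DiscGMod

def trivial (G : Type u) [Group G] [TopologicalSpace G] : DiscGMod G :=
  letI : DistribMulAction G (ULift.{u} ℚ) :=
    { smul _ x := x
      one_smul _ := rfl
      mul_smul _ _ _ := rfl
      smul_zero _ := rfl
      smul_add _ _ _ := rfl }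
  { carrier := ULift.{u} ℚ
    cmm := ⟨fun _ _ _ => rfl⟩
    discrete _ := by
      convert isOpen_univ
      exact eq_univ_of_forall fun _ => rfl }

variable {G : Type u} [Group G] [TopologicalSpace G] [SeparatelyContinuousMul G]

/-- The permutation module `ℚ[X]`. -/
noncomputable def finsupp (X : Type u) [MulAction G X]
    (hX : ∀ x : X, IsOpen (stabilizer G x : Set G)) : DiscGMod G where
  carrier := X →₀ ℚ
  cmm := ⟨fun g c f => by simp only [Finsupp.comapSMul_def, Finsupp.mapDomain_smul]⟩
  discrete := isOpen_stabilizer_finsupp hX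

variable {X : Type u} [MulAction G X] {hX : ∀ x : X, IsOpen (stabilizer G x : Set G)}

noncomputable def augmentation : (finsupp X hX).carrier →ₗ[ℚ] (trivial G).carrier :=
  ULift.moduleEquiv.symm.toLinearMap ∘ₗ Finsupp.linearCombination ℚ fun _ => 1

theorem augmentation_equivariant : Equivariant (augmentation (hX := hX)) := fun _ f =>
  congrArg ULift.up (Finsupp.linearCombination_mapDomain ℚ _ f)

theorem augmentation_surjective [Nonempty X] : Function.Surjective (augmentation (hX := hX)) :=
  fun q => ⟨Finsupp.single (Classical.arbitrary X) q.down, by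
    change ULift.up (Finsupp.linearCombination ℚ (fun _ => 1) (Finsupp.single _ q.down)) = q
    exact congrArg ULift.up (by simp)⟩

end DiscGMod

theorem LinearMap.apply_uliftUp_one_smul {R M : Type*} [Semiring R] [AddCommMonoid M] [Module R M]
    (φ : ULift R →ₗ[R] M) (x : ULift R) : φ x = x.down • φ (ULift.up 1) := by
  rw [← map_smul]
  congr 1
  ext
  simp

variable {G : Type u} [Group G] [TopologicalSpace G]

theorem projOverDiscrete_trivial_iff :
    ProjOverDiscrete G (ULift.{u} ℚ) (fun _ q => q) ↔
      ∀ (A B : DiscGMod G) (π : B.carrier →ₗ[ℚ] A.carrier), DiscGMod.Equivariant π →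
        Function.Surjective π → ∀ a : A.carrier, (∀ g : G, g • a = a) →
          ∃ b : B.carrier, (∀ g : G, g • b = b) ∧ π b = a := by
  let ofElem {M : Type u} [AddCommGroup M] [Module ℚ M] (m : M) : ULift.{u} ℚ →ₗ[ℚ] M :=
    LinearMap.toSpanSingleton ℚ M m ∘ₗ ULift.moduleEquiv.toLinearMap
  have ofElem_equivariant {M : DiscGMod G} {m : M.carrier} (hm : ∀ g : G, g • m = m) (g : G)
      (x : ULift.{u} ℚ) : ofElem m x = g • ofElem m x := by
    change x.down • m = g • x.down • m
    rw [smul_comm, hm]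
  constructor
  · intro hproj A B π hπ hsurj a ha
    obtain ⟨ψ, hψ, hπψ⟩ := hproj A B π hπ hsurj (ofElem a) (ofElem_equivariant ha)
    refine ⟨ψ (ULift.up 1), fun g => (hψ g _).symm, ?_⟩
    simpa [ofElem] using LinearMap.congr_fun hπψ (ULift.up 1)
  · intro hlift A B π hπ hsurj φ hφ
    obtain ⟨b, hb, hπb⟩ := hlift A B π hπ hsurj (φ (ULift.up 1)) fun g => (hφ g _).symm
    refine ⟨ofElem b, ofElem_equivariant hb, LinearMap.ext fun x => ?_⟩
    simp [ofElem, hπb, ← φ.apply_uliftUp_one_smul]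

variable [IsTopologicalGroup G]

theorem projOverDiscrete_trivial_of_compactSpace [CompactSpace G] :
    ProjOverDiscrete G (ULift.{u} ℚ) (fun _ q => q) := by
  refine projOverDiscrete_trivial_iff.mpr fun A B π hπ hsurj a ha => ?_
  obtain ⟨b, rfl⟩ := hsurj a
  have : Finite (G ⧸ stabilizer G b) := Subgroup.quotient_finite_of_isOpen _ (B.discrete b)
  have : Finite (orbit G b) := .of_equiv _ (orbitEquivQuotientStabilizer G b).symm
  exact exists_fixed_preimage_of_finite_orbit π hπ ha

theorem compactSpace_of_projOverDiscrete_trivial [TotallyDisconnectedSpace G]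
    [LocallyCompactSpace G] (h : ProjOverDiscrete G (ULift.{u} ℚ) (fun _ q => q)) :
    CompactSpace G := by
  obtain ⟨O, hO⟩ := exists_isCompact_openSubgroup (G := G)
  have hX : ∀ x : G ⧸ O.toSubgroup, IsOpen (stabilizer G x : Set G) := stabilizer_isOpen G
  obtain ⟨f, hf, hf1⟩ := projOverDiscrete_trivial_iff.mp h _ _ DiscGMod.augmentation
    (DiscGMod.augmentation_equivariant (hX := hX)) DiscGMod.augmentation_surjective
    (ULift.up 1) fun _ => rfl
  have hf1' : Finsupp.linearCombination ℚ (fun _ => (1 : ℚ)) f = 1 := congrArg ULift.down hf1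
  have : Finite (G ⧸ O.toSubgroup) := finite_of_smul_invariant_finsupp f hf <| by
    rintro rfl
    simp at hf1'
  exact compactSpace_of_isCompact_of_finite_quotient hO

/-- A t.d.l.c. group `G` has rational discrete cohomological
dimension `0` — i.e. the trivial discrete `ℚ[G]`-module `ℚ` is projective in the
category of discrete `ℚ[G]`-modules — if and only if `G` is compact. -/
theorem trivial_module_projective_iff_compact (G : Type u) [Group G]
    [TopologicalSpace G] [IsTopologicalGroup G] [TotallyDisconnectedSpace G]
    [LocallyCompactSpace G] :
    ProjOverDiscrete G (ULift.{u} ℚ) (fun _ q => q) ↔ CompactSpace G :=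
  ⟨compactSpace_of_projOverDiscrete_trivial, fun _ => projOverDiscrete_trivial_of_compactSpace⟩
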